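/- arXiv:2203.06707 — 3 statements merged into one kernel-verified Lean document; each statement's English description precedes it below -/
import Mathlib

section
/- For every infinite sequence ξ of feasible subgraphs of G, every solution of the PCO network over ξ, and every s ≥ 0, the number of indices k ≥ 1 with jump time t_k ∈ [s, s+T] is at least 1 and at most N(⌊1/r̲⌋ + 1), where r̲ := min_{1≤i≤N} r_i. -/
open scoped BigOperators Classical ENNReal

namespace PCO

/-- Edge sets of digraphs on the vertex set `Fin N`. -/
abbrev Edges (N : ℕ) := Finset (Fin N × Fin N)

/-- A digraph is simple if it has no self-loops. -/
def Simple (N : ℕ) (E : Edges N) : Prop := ∀ e ∈ E, e.1 ≠ e.2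

/-- The set of out-edges of vertex `i` in the digraph with edge set `E`. -/
def outEdges (N : ℕ) (E : Edges N) (i : Fin N) : Edges N := E.filter (fun e => e.1 = i)

/-- `E'` is (the edge set of) a feasible subgraph of `E`: it is a subgraph on the same
vertex set containing, for each vertex `i`, all out-edges of `i` or none of them. -/
def Feasible (N : ℕ) (E E' : Edges N) : Prop :=
  E' ⊆ E ∧ ∀ i : Fin N, outEdges N E i ⊆ E' ∨ Disjoint (outEdges N E i) E'

/-- The binary phase update rule `R_j`, with threshold `rj`, applied to the state `s`. -/
def Rset (rj s : ℝ) : Set ℝ :=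
  if s < rj then {0} else if s = rj then ({0, 1} : Set ℝ) else {1}

/-- A solution of the PCO network over the sequence `ξ` of (feasible) subgraphs of `E`
(`ξ k` is the graph used at the `k`-th jump, `k ≥ 1`): an unbounded nondecreasing sequence
of jump times `tJ` with `tJ 0 = 0`, together with the states `st k = τ(tJ k, k)` just after
each jump; the state at a hybrid time `(t,k)` is recovered by the flow, see `Sol.val`. -/
structure Sol (N : ℕ) (T : ℝ) (r : Fin N → ℝ) (E : Edges N) (ξ : ℕ → Edges N) where
  tJ : ℕ → ℝ
  st : ℕ → Fin N → ℝ
  tJ0 : tJ 0 = 0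
  mono : Monotone tJ
  unbdd : ∀ M : ℝ, ∃ k, M < tJ k
  box : ∀ k i, st k i ∈ Set.Icc (0:ℝ) 1
  box' : ∀ k i, st k i + (tJ (k+1) - tJ k) / T ∈ Set.Icc (0:ℝ) 1
  jump : ∀ k, ∃ i : Fin N,
      st k i + (tJ (k+1) - tJ k) / T = 1 ∧
      st (k+1) i = 0 ∧
      ∀ j, j ≠ i →
        ((i, j) ∈ ξ (k+1) → st (k+1) j ∈ Rset (r j) (st k j + (tJ (k+1) - tJ k) / T)) ∧
        ((i, j) ∉ ξ (k+1) → st (k+1) j = st k j)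

variable {N : ℕ} {T : ℝ} {r : Fin N → ℝ} {E : Edges N} {ξ : ℕ → Edges N}

/-- The state `τ_i(t,k)` of agent `i` at the hybrid time `(t,k)`. -/
noncomputable def Sol.val (sol : Sol N T r E ξ) (t : ℝ) (k : ℕ) (i : Fin N) : ℝ :=
  sol.st k i + (t - sol.tJ k) / T

/-- `(t,k)` is a hybrid time of the solution. -/
def Sol.HT (sol : Sol N T r E ξ) (t : ℝ) (k : ℕ) : Prop :=
  sol.tJ k ≤ t ∧ t ≤ sol.tJ (k+1)

/-- The synchronization set `A_s = {μ·1_N : μ ∈ [0,1]} ∪ {0,1}^N`. -/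
def SyncSet (N : ℕ) : Set (Fin N → ℝ) :=
  {x | ∃ μ ∈ Set.Icc (0:ℝ) 1, x = fun _ => μ} ∪ {x | ∀ i, x i = 0 ∨ x i = 1}

/-- There is a directed path (walk) of length `n` from `i` to `j` in `E`. -/
def reachIn (N : ℕ) (E : Edges N) : ℕ → Fin N → Fin N → Prop
  | 0, i, j => i = j
  | n+1, i, j => ∃ m : Fin N, (i, m) ∈ E ∧ reachIn N E n m j

/-- `i` is a root: every vertex is reachable from `i`. -/
def IsRoot (N : ℕ) (E : Edges N) (i : Fin N) : Prop := ∀ j : Fin N, ∃ n, reachIn N E n i j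

/-- The depth of `j` with respect to `i`: the length of a shortest directed path from `i` to `j`. -/
noncomputable def depth (N : ℕ) (E : Edges N) (i j : Fin N) : ℕ :=
  sInf {n | reachIn N E n i j}

/-- `q*`, the maximum depth of a vertex with respect to the root `istar`. -/
noncomputable def maxDepth (N : ℕ) (E : Edges N) (istar : Fin N) : ℕ :=
  Finset.univ.sup (fun j => depth N E istar j)

/-- `dep(G)`: the maximum of `q*` over all roots. -/
noncomputable def depG (N : ℕ) (E : Edges N) : ℕ :=
  Finset.univ.sup (fun i => if IsRoot N E i then maxDepth N E i else 0)

/-- `G_q(i*)`: the feasible subgraph of `E` whose edges are the out-edges of the vertices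
at depth `q` with respect to `istar`. -/
noncomputable def Gq (N : ℕ) (E : Edges N) (istar : Fin N) (q : ℕ) : Edges N :=
  E.filter (fun e => depth N E istar e.1 = q)

/-- `r̲ = min_i r_i`. -/
noncomputable def rmin (N : ℕ) (r : Fin N → ℝ) : ℝ := ⨅ i, r i

/-- `ℓ* = N(⌊1/r̲⌋ + 1)`. -/
noncomputable def ellStar (N : ℕ) (r : Fin N → ℝ) : ℕ :=
  N * (Nat.floor (1 / rmin N r) + 1)

/-- `L* = ℓ* q*`: the length of the synchronization string. -/
noncomputable def Lstar (N : ℕ) (r : Fin N → ℝ) (E : Edges N) (istar : Fin N) : ℕ :=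
  ellStar N r * maxDepth N E istar

/-- The sequence `ξ` contains the synchronization string `ζ(i*)` as the consecutive block
`φ_{k₀} ⋯ φ_{k₀+L*−1}`: i.e. `φ_{k₀+qℓ*+m} = G_q(i*)` for `0 ≤ q ≤ q*−1`, `0 ≤ m ≤ ℓ*−1`. -/
noncomputable def HasZetaAt (N : ℕ) (r : Fin N → ℝ) (E : Edges N) (istar : Fin N)
    (ξ : ℕ → Edges N) (k₀ : ℕ) : Prop :=
  ∀ q < maxDepth N E istar, ∀ m < ellStar N r,
    ξ (k₀ + q * ellStar N r + m) = Gq N E istar q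

/-- Partial synchronization set `A_q(i*)`: all agents of depth `≤ q` with respect to `i*`
have a common state in `[0,1]`, or all have states in `{0,1}`; the remaining agents have
states in `[0,1]`. -/
noncomputable def Aq (N : ℕ) (E : Edges N) (istar : Fin N) (q : ℕ) : Set (Fin N → ℝ) :=
  {x | (∀ i, x i ∈ Set.Icc (0:ℝ) 1) ∧
    ((∃ μ ∈ Set.Icc (0:ℝ) 1, ∀ i, depth N E istar i ≤ q → x i = μ) ∨
      (∀ i, depth N E istar i ≤ q → x i = 0 ∨ x i = 1))}

/-- The Lyapunov-like function `V`: one minus the largest circular gap between the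
(sorted) entries of `τ`, when the endpoints of `[0,1]` are identified. -/
noncomputable def Vfun (N : ℕ) (hN : 0 < N) (τ : Fin N → ℝ) : ℝ :=
  1 - Finset.univ.sup' (Finset.univ_nonempty_iff.mpr ⟨⟨0, hN⟩⟩)
      (fun i : Fin N =>
        if h : (i : ℕ) + 1 < N then
          (τ ∘ Tuple.sort τ) ⟨(i : ℕ) + 1, h⟩ - (τ ∘ Tuple.sort τ) i
        else 1 - (τ ∘ Tuple.sort τ) i + (τ ∘ Tuple.sort τ) ⟨0, hN⟩)

/-- `i` has at least one out-neighbor in `E`. -/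
def HasOut (N : ℕ) (E : Edges N) (i : Fin N) : Prop := ∃ j : Fin N, (i, j) ∈ E

/-- The set `V*` of vertices of `E` having at least one out-neighbor. -/
abbrev Vstar (N : ℕ) (E : Edges N) := {i : Fin N // HasOut N E i}

/-- The feasible subgraph corresponding to `v : V* → {0,1}`: its edge set is the union of
the out-edge sets of those `i ∈ V*` with `v i = 1`. -/
noncomputable def graphOf (N : ℕ) (E : Edges N) (v : Vstar N E → Bool) : Edges N :=
  E.filter (fun e => (if h : HasOut N E e.1 then v ⟨e.1, h⟩ else false) = true)

/-- The sample space `Ω = ({0,1}^{V*})^{ℕ}`; `ω k` represents `ω_{k+1}`. -/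
abbrev Omega (N : ℕ) (E : Edges N) := ℕ → (Vstar N E → Bool)

open MeasureTheory in
/-- The Bernoulli(`p`) measure on `{0,1}`. -/
noncomputable def bern (p : ℝ) (hp : p ≤ 1) : Measure Bool :=
  (PMF.bernoulli (Real.toNNReal p) (Real.toNNReal_le_one.mpr hp)).toMeasure

open MeasureTheory in
/-- The measure `μ_p` on `{0,1}^{V*}` making coordinates i.i.d. Bernoulli(`p`). -/
noncomputable def muP (N : ℕ) (E : Edges N) (p : ℝ) (hp : p ≤ 1) :
    Measure (Vstar N E → Bool) :=
  Measure.pi (fun _ => bern p hp)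

open MeasureTheory in
/-- `P` is the countable product of copies of `μ_p` on `Ω`: the probability of every
cylinder event is the corresponding product. -/
def IsProductMeasure (N : ℕ) (E : Edges N) (p : ℝ) (hp : p ≤ 1)
    (P : Measure (Omega N E)) : Prop :=
  ∀ (S : Finset ℕ) (f : ℕ → Set (Vstar N E → Bool)),
    P {ω | ∀ k ∈ S, ω k ∈ f k} = ∏ k ∈ S, muP N E p hp (f k)

/-- The sample path `ω` contains the synchronization string `ζ(i*)` at positions
`ω_{ℓ+1} ⋯ ω_{ℓ+L*}`. -/
noncomputable def HasZetaAtOmega (N : ℕ) (r : Fin N → ℝ) (E : Edges N) (istar : Fin N)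
    (ω : Omega N E) (ℓ : ℕ) : Prop :=
  ∀ q < maxDepth N E istar, ∀ m < ellStar N r,
    graphOf N E (ω (ℓ + q * ellStar N r + m)) = Gq N E istar q

/-- The sequence of feasible subgraphs `ξ = ω` determined by the sample path `ω`
(`seqOf ω k = φ_k` for `k ≥ 1`). -/
noncomputable def seqOf (N : ℕ) (E : Edges N) (ω : Omega N E) : ℕ → Edges N :=
  fun k => graphOf N E (ω (k - 1))

/-- The sync-time `T*` of a solution: the infimum of the (continuous) times `t ≥ 0` at
which the state lies in the synchronization set (`∞` if there is no such time). -/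
noncomputable def Sol.syncTime (sol : Sol N T r E ξ) : ℝ≥0∞ :=
  sInf {x : ℝ≥0∞ | ∃ t : ℝ, ∃ k : ℕ, 0 ≤ t ∧ sol.HT t k ∧
    (fun i => sol.val t k i) ∈ SyncSet N ∧ x = ENNReal.ofReal t}

/-- Euclidean distance from a point of `ℝ^N` to a set. -/
noncomputable def eucDist (N : ℕ) (x : Fin N → ℝ) (S : Set (Fin N → ℝ)) : ℝ :=
  Metric.infDist ((WithLp.equiv 2 (Fin N → ℝ)).symm x)
    ((WithLp.equiv 2 (Fin N → ℝ)).symm '' S)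

/-! Consecutive jumps are at most `T` apart, since between them the phase of the firing agent
grows from a value `≥ 0` to `1`; hence every window `[s, s + T]` contains a jump. After a reset,
an agent's phase can only be pushed to `1` by a jump once it has reached its threshold `r i`, so
it grows no faster than the flow for `r i * T` time: two firings of the same agent are at least
`r i * T ≥ r̲ * T` apart, and each of the `N` agents fires at most `⌊1 / r̲⌋ + 1` times in a
window of length `T`. -/

theorem card_le_floor_div_add_one_of_separated {α : Type*} [LinearOrder α]
    (S : Finset α) (f : α → ℝ) {s L d : ℝ} (hd : 0 < d)
    (hmem : ∀ a ∈ S, f a ∈ Set.Icc s (s + L))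
    (hsep : ∀ a ∈ S, ∀ b ∈ S, a < b → f a + d ≤ f b) :
    S.card ≤ ⌊L / d⌋₊ + 1 := by
  let g : α → ℕ := fun a => ⌊(f a - s) / d⌋₊
  have hg : StrictMonoOn g S := by
    intro a ha b hb hab
    have hstep : (f a - s) / d + 1 ≤ (f b - s) / d := by
      rw [div_add_one hd.ne', div_le_div_iff_of_pos_right hd]
      linarith [hsep a ha b hb hab]
    have hnonneg : 0 ≤ (f a - s) / d := div_nonneg (by linarith [(hmem a ha).1]) hd.le
    calc g a < g a + 1 := Nat.lt_succ_self _
      _ = ⌊(f a - s) / d + 1⌋₊ := (Nat.floor_add_one hnonneg).symm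
      _ ≤ g b := Nat.floor_le_floor hstep
  have hmaps : Set.MapsTo g S (Finset.range (⌊L / d⌋₊ + 1)) := by
    intro a ha
    rw [Finset.mem_coe, Finset.mem_range, Nat.lt_succ_iff]
    exact Nat.floor_le_floor (div_le_div_of_nonneg_right (by linarith [(hmem a ha).2]) hd.le)
  simpa using Finset.card_le_card_of_injOn g hmaps hg.injOn

theorem rmin_le (r : Fin N → ℝ) (i : Fin N) : rmin N r ≤ r i :=
  ciInf_le (Set.finite_range r).bddBelow i

theorem rmin_pos [Nonempty (Fin N)] (hr : ∀ i, 0 < r i) : 0 < rmin N r := by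
  obtain ⟨i, hi⟩ := exists_eq_ciInf_of_finite (f := r)
  rw [rmin, ← hi]
  exact hr i

namespace Sol

theorem nonempty_fin (sol : Sol N T r E ξ) : Nonempty (Fin N) :=
  ⟨(sol.jump 0).choose⟩

variable (sol : Sol N T r E ξ)

/-- The agent that fires at the jump time `tJ (k + 1)`. -/
noncomputable def firer (k : ℕ) : Fin N :=
  (sol.jump k).choose

theorem val_firer (k : ℕ) : sol.val (sol.tJ (k + 1)) k (sol.firer k) = 1 :=
  (sol.jump k).choose_spec.1

theorem st_succ_firer (k : ℕ) : sol.st (k + 1) (sol.firer k) = 0 :=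
  (sol.jump k).choose_spec.2.1

theorem tJ_succ_le (hT : 0 < T) (k : ℕ) : sol.tJ (k + 1) ≤ sol.tJ k + T := by
  have h := sol.val_firer k
  have hst := (sol.box k (sol.firer k)).1
  rw [val] at h
  have : (sol.tJ (k + 1) - sol.tJ k) / T ≤ 1 := by linarith
  linarith [(div_le_one hT).mp this]

theorem st_succ_of_val_lt {k : ℕ} {i : Fin N} (h : sol.val (sol.tJ (k + 1)) k i < r i) :
    sol.st (k + 1) i = 0 ∨ sol.st (k + 1) i = sol.st k i := by
  obtain ⟨j, -, hj0, hupd⟩ := sol.jump k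
  by_cases hij : i = j
  · exact .inl (hij ▸ hj0)
  obtain ⟨hin, hout⟩ := hupd i hij
  by_cases hedge : (j, i) ∈ ξ (k + 1)
  · have hR := hin hedge
    rw [Rset, if_pos (show sol.st k i + (sol.tJ (k + 1) - sol.tJ k) / T < r i from h)] at hR
    exact .inl hR
  · exact .inr (hout hedge)

theorem val_succ_le_of_st_le {i : Fin N} {m k : ℕ}
    (h : sol.st k i ≤ (sol.tJ k - sol.tJ m) / T) :
    sol.val (sol.tJ (k + 1)) k i ≤ (sol.tJ (k + 1) - sol.tJ m) / T :=
  calc sol.st k i + (sol.tJ (k + 1) - sol.tJ k) / T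
      ≤ (sol.tJ k - sol.tJ m) / T + (sol.tJ (k + 1) - sol.tJ k) / T := by gcongr
    _ = (sol.tJ (k + 1) - sol.tJ m) / T := by ring

theorem st_le_of_tJ_lt (hT : 0 < T) {i : Fin N} {m : ℕ} (h0 : sol.st m i = 0) {k : ℕ}
    (hmk : m ≤ k) (hk : sol.tJ k < sol.tJ m + r i * T) :
    sol.st k i ≤ (sol.tJ k - sol.tJ m) / T := by
  induction k, hmk using Nat.le_induction with
  | base => simp [h0]
  | succ k hmk ih =>
    have hmono : sol.tJ k ≤ sol.tJ (k + 1) := sol.mono k.le_succ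
    have hst := ih (hmono.trans_lt hk)
    have hflow : sol.st k i ≤ (sol.tJ (k + 1) - sol.tJ m) / T :=
      hst.trans (div_le_div_of_nonneg_right (by linarith) hT.le)
    have hval := sol.val_succ_le_of_st_le hst
    have hlt : (sol.tJ (k + 1) - sol.tJ m) / T < r i := by
      rw [div_lt_iff₀ hT]
      linarith
    rcases sol.st_succ_of_val_lt (hval.trans_lt hlt) with h | h
    · rw [h]
      exact div_nonneg (by linarith [sol.mono (hmk.trans k.le_succ)]) hT.le
    · rwa [h]

theorem tJ_add_le_of_st_eq_zero (hT : 0 < T) {i : Fin N} (hri : r i ≤ 1) {m k : ℕ}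
    (h0 : sol.st m i = 0) (hmk : m ≤ k) (h1 : sol.val (sol.tJ (k + 1)) k i = 1) :
    sol.tJ m + r i * T ≤ sol.tJ (k + 1) := by
  by_contra! hlt
  have hst := sol.st_le_of_tJ_lt hT h0 hmk ((sol.mono k.le_succ).trans_lt hlt)
  have hval := sol.val_succ_le_of_st_le hst
  have : (sol.tJ (k + 1) - sol.tJ m) / T < 1 := by
    rw [div_lt_iff₀ hT]
    nlinarith
  linarith

theorem tJ_succ_add_le_of_firer_eq (hT : 0 < T) {k k' : ℕ} (hri : r (sol.firer k) ≤ 1)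
    (hkk' : k < k') (h : sol.firer k = sol.firer k') :
    sol.tJ (k + 1) + r (sol.firer k) * T ≤ sol.tJ (k' + 1) :=
  sol.tJ_add_le_of_st_eq_zero hT hri (sol.st_succ_firer k) hkk' (h ▸ sol.val_firer k')

def window (s : ℝ) : Set ℕ :=
  {k | 1 ≤ k ∧ sol.tJ k ∈ Set.Icc s (s + T)}

theorem finite_window (s : ℝ) : (sol.window s).Finite := by
  obtain ⟨K, hK⟩ := sol.unbdd (s + T)
  refine (Set.finite_Iio K).subset fun k hk => ?_
  by_contra hKk
  exact (hK.trans_le (sol.mono (not_lt.mp hKk))).not_ge hk.2.2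

theorem window_nonempty (hT : 0 < T) {s : ℝ} (hs : 0 ≤ s) : (sol.window s).Nonempty := by
  have hex : ∃ n, s ≤ sol.tJ (n + 1) := by
    obtain ⟨k, hk⟩ := sol.unbdd s
    exact ⟨k, hk.le.trans (sol.mono k.le_succ)⟩
  have hprev : sol.tJ (Nat.find hex) ≤ s := by
    rcases hn : Nat.find hex with _ | n
    · rw [sol.tJ0]
      exact hs
    · exact (not_le.mp (Nat.find_min hex (hn ▸ n.lt_succ_self))).le
  exact ⟨Nat.find hex + 1, Nat.le_add_left 1 _, Nat.find_spec hex,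
    (sol.tJ_succ_le hT _).trans (by linarith)⟩

theorem ncard_window_le (hT : 0 < T) (hr : ∀ i, r i ∈ Set.Ioo (0 : ℝ) 1) (s : ℝ) :
    (sol.window s).ncard ≤ N * (⌊1 / rmin N r⌋₊ + 1) := by
  have := sol.nonempty_fin
  have hd : 0 < rmin N r * T := mul_pos (rmin_pos fun i => (hr i).1) hT
  have hL : T / (rmin N r * T) = 1 / rmin N r := by field_simp
  rw [Set.ncard_eq_toFinset_card _ (sol.finite_window s), mul_comm]
  calc (sol.finite_window s).toFinset.card
      ≤ (⌊1 / rmin N r⌋₊ + 1) * (Finset.univ : Finset (Fin N)).card :=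
        Finset.card_le_mul_card_image_of_maps_to (f := fun k => sol.firer (k - 1))
          (fun _ _ => Finset.mem_univ _) _ fun i _ => ?_
    _ = (⌊1 / rmin N r⌋₊ + 1) * N := by rw [Finset.card_univ, Fintype.card_fin]
  rw [← hL]
  refine card_le_floor_div_add_one_of_separated (s := s) _ sol.tJ hd (fun a ha => ?_) ?_
  · simp only [Finset.mem_filter, Set.Finite.mem_toFinset] at ha
    exact ha.1.2
  intro a ha b hb hab
  simp only [Finset.mem_filter, Set.Finite.mem_toFinset] at ha hb
  obtain ⟨⟨ha1, -⟩, hai⟩ := ha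
  obtain ⟨⟨hb1, -⟩, hbi⟩ := hb
  obtain ⟨a, rfl⟩ := Nat.exists_eq_add_of_le' ha1
  obtain ⟨b, rfl⟩ := Nat.exists_eq_add_of_le' hb1
  simp only [Nat.add_sub_cancel] at hai hbi
  have hgap := sol.tJ_succ_add_le_of_firer_eq hT (hr _).2.le (by omega) (hai.trans hbi.symm)
  nlinarith [rmin_le r (sol.firer a)]

end Sol

theorem stmt7_general
    (N : ℕ) (T : ℝ) (hT : 0 < T) (r : Fin N → ℝ)
    (hr : ∀ i, r i ∈ Set.Ioo (0:ℝ) 1) (E : Edges N)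
    (ξ : ℕ → Edges N)
    (sol : Sol N T r E ξ) (s : ℝ) (hs : 0 ≤ s) :
    {k : ℕ | 1 ≤ k ∧ sol.tJ k ∈ Set.Icc s (s + T)}.Finite ∧
    1 ≤ {k : ℕ | 1 ≤ k ∧ sol.tJ k ∈ Set.Icc s (s + T)}.ncard ∧
    {k : ℕ | 1 ≤ k ∧ sol.tJ k ∈ Set.Icc s (s + T)}.ncard ≤
      N * (Nat.floor (1 / rmin N r) + 1) :=
  ⟨sol.finite_window s,
    (Set.ncard_pos (sol.finite_window s)).mpr (sol.window_nonempty hT hs),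
    sol.ncard_window_le hT hr s⟩

theorem stmt7
    (N : ℕ) (hN : 0 < N) (T : ℝ) (hT : 0 < T) (r : Fin N → ℝ)
    (hr : ∀ i, r i ∈ Set.Ioo (0:ℝ) 1) (E : Edges N) (hE : Simple N E)
    (ξ : ℕ → Edges N) (hξ : ∀ k, 1 ≤ k → Feasible N E (ξ k))
    (sol : Sol N T r E ξ) (s : ℝ) (hs : 0 ≤ s) :
    {k : ℕ | 1 ≤ k ∧ sol.tJ k ∈ Set.Icc s (s + T)}.Finite ∧
    1 ≤ {k : ℕ | 1 ≤ k ∧ sol.tJ k ∈ Set.Icc s (s + T)}.ncard ∧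
    {k : ℕ | 1 ≤ k ∧ sol.tJ k ∈ Set.Icc s (s + T)}.ncard ≤
      N * (Nat.floor (1 / rmin N r) + 1) :=
  stmt7_general N T hT r hr E ξ sol s hs

end PCO
end

section
/- Assume G is rooted with root i*, let ℓ ≥ 0 be an integer, and assume p ∈ (0, 1/2]. Then P({ ω ∈ Ω : ω_{ℓ+1} ω_{ℓ+2} ⋯ ω_{ℓ+L*} = ζ(i*) }) ≥ ( p (1−p)^{dep(G)−1} )^{N ℓ*}. -/
open scoped BigOperators Classical ENNReal

namespace PCO

variable {N : ℕ} {T : ℝ} {r : Fin N → ℝ} {E : Edges N} {ξ : ℕ → Edges N}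

/-! The event is a cylinder: each of the positions `ℓ+1, …, ℓ+L*` must carry the code of one
`G_q(i*)`, so by independence its probability factors over the `ℓ*` repetitions, the depths
`q < q*` and the vertices `i ∈ V*`. For a fixed repetition and vertex the factors over `q` are
`p` for at most one `q` (namely `q = depth i`) and `1 - p ≥ p` otherwise, so their product is at
least `p (1-p)^(q*-1) ≥ p (1-p)^(dep G - 1)`; as this constant is at most `1` and `|V*| ≤ N`,
the bound follows. -/

section SamplePaths

variable {N : ℕ} {E : Edges N}

lemma mem_graphOf_iff (v : Vstar N E → Bool) (e : Fin N × Fin N) :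
    e ∈ graphOf N E v ↔ ∃ he : e ∈ E, v ⟨e.1, e.2, he⟩ = true := by
  simp only [graphOf, Finset.mem_filter]
  constructor
  · rintro ⟨he, hv⟩
    exact ⟨he, by rwa [dif_pos ⟨e.2, he⟩] at hv⟩
  · rintro ⟨he, hv⟩
    exact ⟨he, by rwa [dif_pos ⟨e.2, he⟩]⟩

lemma graphOf_injective : Function.Injective (graphOf N E) := by
  intro v w hvw
  funext ⟨i, j, hij⟩
  have hv := mem_graphOf_iff v (i, j)
  have hw := mem_graphOf_iff w (i, j)
  rw [hvw, hw] at hv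
  simpa [hij] using hv.symm

noncomputable def levelIndicator (N : ℕ) (E : Edges N) (istar : Fin N) (q : ℕ) :
    Vstar N E → Bool :=
  fun i => decide (depth N E istar i.1 = q)

lemma graphOf_levelIndicator (istar : Fin N) (q : ℕ) :
    graphOf N E (levelIndicator N E istar q) = Gq N E istar q := by
  ext e
  simp [mem_graphOf_iff, Gq, levelIndicator]

lemma graphOf_eq_Gq_iff (istar : Fin N) (q : ℕ) (v : Vstar N E → Bool) :
    graphOf N E v = Gq N E istar q ↔ v = levelIndicator N E istar q := by
  rw [← graphOf_levelIndicator, graphOf_injective.eq_iff]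

lemma injOn_blockPosition (ℓ L : ℕ) (s : Finset ℕ) :
    Set.InjOn (fun x : ℕ × ℕ => ℓ + x.2 * L + x.1) (Finset.range L ×ˢ s : Finset _) := by
  rintro ⟨m₁, q₁⟩ h₁ ⟨m₂, q₂⟩ h₂ h
  simp only [Finset.coe_product, Set.mem_prod, Finset.mem_coe, Finset.mem_range] at h₁ h₂
  have h' : m₁ + L * q₁ = m₂ + L * q₂ := by simp only at h; linarith
  have hL : 0 < L := (Nat.zero_le m₁).trans_lt h₁.1
  have hq : q₁ = q₂ := by
    simpa [Nat.add_mul_div_left _ _ hL, Nat.div_eq_of_lt h₁.1, Nat.div_eq_of_lt h₂.1]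
      using congrArg (· / L) h'
  subst hq
  exact Prod.ext (Nat.add_right_cancel h') rfl

lemma setOf_hasZetaAtOmega_eq (r : Fin N → ℝ) (istar : Fin N) (ℓ : ℕ) :
    {ω : Omega N E | HasZetaAtOmega N r E istar ω ℓ} =
      {ω | ∀ x ∈ Finset.range (ellStar N r) ×ˢ Finset.range (maxDepth N E istar),
        ω (ℓ + x.2 * ellStar N r + x.1) ∈ ({levelIndicator N E istar x.2} : Set _)} := by
  ext ω
  simp only [Set.mem_ofPred, HasZetaAtOmega, graphOf_eq_Gq_iff, Finset.mem_product,
    Finset.mem_range, Set.mem_singleton_iff, Prod.forall]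
  exact ⟨fun h m q hmq => h q hmq.2 m hmq.1, fun h q hq m hm => h m q ⟨hm, hq⟩⟩

end SamplePaths

section ProductMeasure

variable {N : ℕ} {E : Edges N} {p : ℝ} {hp : p ≤ 1}

instance isProbabilityMeasure_bern : MeasureTheory.IsProbabilityMeasure (bern p hp) := by
  unfold bern
  infer_instance

lemma IsProductMeasure.measure_setOf_forall_mem {P : MeasureTheory.Measure (Omega N E)}
    (hP : IsProductMeasure N E p hp P) {ι : Type*} (s : Finset ι) {pos : ι → ℕ}
    (hpos : Set.InjOn pos s) (A : ι → Set (Vstar N E → Bool)) :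
    P {ω | ∀ x ∈ s, ω (pos x) ∈ A x} = ∏ x ∈ s, muP N E p hp (A x) := by
  set f : ℕ → Set (Vstar N E → Bool) := fun k => {v | ∀ x ∈ s, pos x = k → v ∈ A x}
  have hf : ∀ x ∈ s, f (pos x) = A x := fun x hx => by
    ext v
    exact ⟨fun h => h x hx rfl, fun h y hy hyx => hpos hy hx hyx ▸ h⟩
  have hev : {ω : Omega N E | ∀ x ∈ s, ω (pos x) ∈ A x} =
      {ω | ∀ k ∈ s.image pos, ω k ∈ f k} := by
    ext ω
    simp only [Finset.forall_mem_image]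
    exact forall₂_congr fun x hx => by rw [hf x hx]
  rw [hev, hP, Finset.prod_image hpos]
  exact Finset.prod_congr rfl fun x hx => by rw [hf x hx]

lemma bern_singleton (hp0 : 0 ≤ p) (b : Bool) :
    bern p hp {b} = ENNReal.ofReal (if b then p else 1 - p) := by
  rw [bern, PMF.toMeasure_apply_singleton _ _ (measurableSet_singleton _)]
  cases b
  · change ((1 - p.toNNReal : NNReal) : ENNReal) = _
    rw [if_neg Bool.false_ne_true, ENNReal.ofReal_sub _ hp0, ENNReal.ofReal_one]
    rfl
  · rfl

lemma muP_singleton (hp0 : 0 ≤ p) (v : Vstar N E → Bool) :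
    muP N E p hp {v} = ∏ i, ENNReal.ofReal (if v i then p else 1 - p) := by
  rw [← Set.univ_pi_singleton, muP, MeasureTheory.Measure.pi_pi]
  exact Finset.prod_congr rfl fun i _ => bern_singleton hp0 (v i)

end ProductMeasure

lemma le_prod_range_ite {p : ℝ} (hp0 : 0 ≤ p) (hp : p ≤ 1 / 2) {q dep : ℕ} (hq : q ≤ dep)
    (d : ℕ) :
    p * (1 - p) ^ (dep - 1) ≤ ∏ k ∈ Finset.range q, (if d = k then p else 1 - p) := by
  have h1p : 0 ≤ 1 - p := by linarith
  have hanti : (1 - p) ^ (dep - 1) ≤ (1 - p) ^ (q - 1) :=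
    pow_le_pow_of_le_one h1p (by linarith) (by omega)
  rcases Nat.eq_zero_or_pos q with rfl | hq0
  · simpa using mul_le_one₀ (by linarith) (pow_nonneg h1p _) (pow_le_one₀ h1p (by linarith))
  by_cases hd : d < q
  · have hrest : ∏ k ∈ (Finset.range q).erase d, (if d = k then p else 1 - p)
        = (1 - p) ^ (q - 1) := by
      rw [Finset.prod_congr rfl fun k hk => if_neg (Finset.ne_of_mem_erase hk).symm,
        Finset.prod_const, Finset.card_erase_of_mem (Finset.mem_range.2 hd), Finset.card_range]
    rw [← Finset.mul_prod_erase _ _ (Finset.mem_range.2 hd), if_pos rfl, hrest]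
    exact mul_le_mul_of_nonneg_left hanti hp0
  · have hall : ∏ k ∈ Finset.range q, (if d = k then p else 1 - p) = (1 - p) ^ q := by
      rw [Finset.prod_congr rfl fun k hk => if_neg (by simp at hk; omega), Finset.prod_const,
        Finset.card_range]
    rw [hall, ← Nat.sub_add_cancel hq0, pow_succ']
    exact mul_le_mul (by linarith) hanti (pow_nonneg h1p _) h1p

lemma maxDepth_le_depG {N : ℕ} {E : Edges N} {i : Fin N} (hi : IsRoot N E i) :
    maxDepth N E i ≤ depG N E := by
  simpa only [depG, if_pos hi] using
    Finset.le_sup (f := fun j => if IsRoot N E j then maxDepth N E j else 0) (Finset.mem_univ i)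

theorem stmt12
    (N : ℕ) (r : Fin N → ℝ) (E : Edges N)
    (istar : Fin N) (hroot : IsRoot N E istar) (ℓ : ℕ)
    (p : ℝ) (hp0 : 0 < p) (hp : p ≤ 1/2)
    (P : MeasureTheory.Measure (Omega N E))
    (hP : IsProductMeasure N E p (by linarith) P) :
    ENNReal.ofReal (p * (1 - p) ^ (depG N E - 1)) ^ (N * ellStar N r) ≤
      P {ω : Omega N E | HasZetaAtOmega N r E istar ω ℓ} := by
  set c := p * (1 - p) ^ (depG N E - 1)
  have hvertex : ∀ d : ℕ, ENNReal.ofReal c ≤ ∏ q ∈ Finset.range (maxDepth N E istar),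
      ENNReal.ofReal (if d = q then p else 1 - p) := fun d => by
    rw [← ENNReal.ofReal_prod_of_nonneg fun q _ => by split_ifs <;> linarith]
    exact ENNReal.ofReal_le_ofReal (le_prod_range_ite hp0.le hp (maxDepth_le_depG hroot) d)
  have hc1 : ENNReal.ofReal c ≤ 1 := ENNReal.ofReal_le_one.2 <| by
    simpa using le_prod_range_ite hp0.le hp (Nat.zero_le (depG N E)) 0
  have hcard : Fintype.card (Vstar N E) ≤ N := by
    simpa using Fintype.card_subtype_le (fun i : Fin N => HasOut N E i)
  rw [setOf_hasZetaAtOmega_eq,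
    hP.measure_setOf_forall_mem _ (injOn_blockPosition ℓ _ _), Finset.prod_product]
  simp only [muP_singleton hp0.le, levelIndicator, decide_eq_true_eq]
  calc ENNReal.ofReal c ^ (N * ellStar N r)
      = ∏ _m ∈ Finset.range (ellStar N r), ENNReal.ofReal c ^ N := by
        rw [Finset.prod_const, Finset.card_range, pow_mul]
    _ ≤ ∏ _m ∈ Finset.range (ellStar N r), ∏ _i : Vstar N E, ENNReal.ofReal c := by
        refine Finset.prod_le_prod' fun _ _ => ?_
        rw [Finset.prod_const, Finset.card_univ]
        exact pow_le_pow_right_of_le_one' hc1 hcard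
    _ ≤ _ := by
        refine Finset.prod_le_prod' fun _ _ => ?_
        rw [Finset.prod_comm]
        exact Finset.prod_le_prod' fun i _ => hvertex _

end PCO
end

section
/- For every τ ∈ [0,1]^N, one has V(τ) = 0 if and only if τ ∈ A_s; that is, the function V is positive definite with respect to the synchronization set A_s. -/
/-!
Sort the entries of `τ`. All circular gaps of the sorted tuple are at most `1`, so `V(τ) = 0`
exactly when one gap equals `1`. An inner gap equal to `1` jumps from `0` to `1`, which by
monotonicity splits the entries into a block of `0`s and a block of `1`s; the wrap-around gap
equals `1` exactly when the smallest and largest entries agree, i.e. all entries are equal.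
Conversely, a constant tuple has a full wrap-around gap, and a non-constant `{0,1}`-tuple has a
full inner gap where it switches from `0` to `1`.
-/

open scoped BigOperators Classical ENNReal

namespace PCO

variable {N : ℕ} {T : ℝ} {r : Fin N → ℝ} {E : Edges N} {ξ : ℕ → Edges N}

noncomputable def circGap (hN : 0 < N) (s : Fin N → ℝ) (i : Fin N) : ℝ :=
  if h : (i : ℕ) + 1 < N then s ⟨i + 1, h⟩ - s i else 1 - s i + s ⟨0, hN⟩

theorem Vfun_eq_one_sub_sup'_circGap (hN : 0 < N) (τ : Fin N → ℝ) :
    Vfun N hN τ = 1 - Finset.univ.sup' ⟨⟨0, hN⟩, Finset.mem_univ _⟩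
      (circGap hN (τ ∘ Tuple.sort τ)) :=
  rfl

section circGap

variable {hN : 0 < N} {s : Fin N → ℝ}

theorem circGap_of_lt {i : Fin N} (h : (i : ℕ) + 1 < N) :
    circGap hN s i = s ⟨i + 1, h⟩ - s i :=
  dif_pos h

theorem circGap_of_not_lt {i : Fin N} (h : ¬(i : ℕ) + 1 < N) :
    circGap hN s i = 1 - s i + s ⟨0, hN⟩ :=
  dif_neg h

theorem circGap_le_one (hmono : Monotone s) (hs : ∀ i, s i ∈ Set.Icc (0 : ℝ) 1) (i : Fin N) :
    circGap hN s i ≤ 1 := by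
  by_cases h : (i : ℕ) + 1 < N
  · rw [circGap_of_lt h]
    linarith [(hs ⟨i + 1, h⟩).2, (hs i).1]
  · rw [circGap_of_not_lt h]
    linarith [hmono (show (⟨0, hN⟩ : Fin N) ≤ i from Nat.zero_le _)]

theorem mem_syncSet_of_circGap_eq_one (hmono : Monotone s)
    (hs : ∀ i, s i ∈ Set.Icc (0 : ℝ) 1) {i : Fin N} (hi : circGap hN s i = 1) :
    s ∈ SyncSet N := by
  by_cases h : (i : ℕ) + 1 < N
  · rw [circGap_of_lt h] at hi
    have hi0 : s i = 0 := by linarith [(hs ⟨i + 1, h⟩).2, (hs i).1]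
    refine Or.inr fun j => ?_
    rcases le_or_gt j i with hj | hj
    · exact Or.inl (le_antisymm (hi0 ▸ hmono hj) (hs j).1)
    · have hle : (⟨i + 1, h⟩ : Fin N) ≤ j := Fin.le_def.mpr (Nat.succ_le_of_lt hj)
      exact Or.inr (le_antisymm (hs j).2 (by linarith [hmono hle]))
  · rw [circGap_of_not_lt h] at hi
    refine Or.inl ⟨s ⟨0, hN⟩, hs _, funext fun j => le_antisymm ?_ (hmono (Nat.zero_le _))⟩
    linarith [hmono (show j ≤ i from Fin.le_def.mpr (by omega))]

theorem exists_circGap_eq_one_of_mem_syncSet (hmono : Monotone s) (hsync : s ∈ SyncSet N) :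
    ∃ i, circGap hN s i = 1 := by
  have hlast : N - 1 < N := Nat.sub_lt hN one_pos
  have hwrap : circGap hN s ⟨N - 1, hlast⟩ = 1 - s ⟨N - 1, hlast⟩ + s ⟨0, hN⟩ :=
    circGap_of_not_lt (by simp only; omega)
  by_cases hends : s ⟨N - 1, hlast⟩ = s ⟨0, hN⟩
  · exact ⟨_, by rw [hwrap, hends]; ring⟩
  rcases hsync with ⟨μ, -, rfl⟩ | h01
  · exact absurd rfl hends
  have hfirst_last : s ⟨0, hN⟩ = 0 ∧ s ⟨N - 1, hlast⟩ = 1 := by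
    have := hmono (show (⟨0, hN⟩ : Fin N) ≤ ⟨N - 1, hlast⟩ from Nat.zero_le _)
    rcases h01 ⟨0, hN⟩ with h | h <;> rcases h01 ⟨N - 1, hlast⟩ with h' | h' <;> grind
  obtain ⟨n, hn, hlt, hn1⟩ := Nat.exists_not_and_succ_of_not_zero_of_exists
    (p := fun n => ∃ h : n < N, s ⟨n, h⟩ = 1) (by simp [hfirst_last.1])
    ⟨N - 1, hlast, hfirst_last.2⟩
  have hn0 : s ⟨n, by omega⟩ = 0 := (h01 _).resolve_right fun h => hn ⟨_, h⟩
  exact ⟨⟨n, by omega⟩, by rw [circGap_of_lt hlt, hn1, hn0]; ring⟩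

theorem sup'_circGap_eq_one_iff (hmono : Monotone s)
    (hs : ∀ i, s i ∈ Set.Icc (0 : ℝ) 1) :
    Finset.univ.sup' ⟨⟨0, hN⟩, Finset.mem_univ _⟩ (circGap hN s) = 1 ↔
      s ∈ SyncSet N := by
  constructor
  · intro h
    obtain ⟨i, -, hi⟩ :=
      Finset.exists_mem_eq_sup' ⟨⟨0, hN⟩, Finset.mem_univ _⟩ (circGap hN s)
    exact mem_syncSet_of_circGap_eq_one hmono hs (hi ▸ h)
  · intro hsync
    obtain ⟨i, hi⟩ := exists_circGap_eq_one_of_mem_syncSet hmono hsync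
    exact le_antisymm (Finset.sup'_le _ _ fun j _ => circGap_le_one hmono hs j)
      (hi ▸ Finset.le_sup' _ (Finset.mem_univ i))

end circGap

theorem comp_mem_syncSet {x : Fin N → ℝ} (hx : x ∈ SyncSet N) (f : Fin N → Fin N) :
    x ∘ f ∈ SyncSet N := by
  rcases hx with ⟨μ, hμ, rfl⟩ | h01
  · exact Or.inl ⟨μ, hμ, rfl⟩
  · exact Or.inr fun i => h01 (f i)

theorem comp_perm_mem_syncSet_iff {x : Fin N → ℝ} (σ : Equiv.Perm (Fin N)) :
    x ∘ σ ∈ SyncSet N ↔ x ∈ SyncSet N :=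
  ⟨fun h => by simpa [Function.comp_def] using comp_mem_syncSet h σ.symm,
    fun h => comp_mem_syncSet h σ⟩

theorem stmt15 (N : ℕ) (hN : 0 < N) (τ : Fin N → ℝ)
    (hτ : ∀ i, τ i ∈ Set.Icc (0:ℝ) 1) :
    Vfun N hN τ = 0 ↔ τ ∈ SyncSet N := by
  rw [Vfun_eq_one_sub_sup'_circGap, sub_eq_zero, eq_comm,
    sup'_circGap_eq_one_iff (Tuple.monotone_sort τ) (fun i => hτ _), comp_perm_mem_syncSet_iff]

end PCO
end
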